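/- The left transfer matrix A^L(α,z) = [[z(ρ^L)⁻¹, −(ρ^L)⁻¹α†],[−z(ρ^R)⁻¹α, (ρ^R)⁻¹]] satisfies the J-unitarity relation A^L(α,w)† J A^L(α,z) = [[w̄z I, 0],[0, −I]], where J = diag(I, −I), ρ^L = (I − α†α)^{1/2}, ρ^R = (I − αα†)^{1/2}, and α is a strict contraction. -/

import Mathlib

noncomputable section

open ContinuousLinearMap

variable {H K : Type*}
  [NormedAddCommGroup H] [InnerProductSpace ℂ H] [CompleteSpace H]
  [NormedAddCommGroup K] [InnerProductSpace ℂ K] [CompleteSpace K]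

/-- The 2×2 block operator matrix `[[A, B], [B', C]]` acting on the Hilbert space `H ⊕ K`
(realized as `WithLp 2 (H × K)`). -/
def blockOp (A : H →L[ℂ] H) (B : K →L[ℂ] H) (B' : H →L[ℂ] K) (C : K →L[ℂ] K) :
    WithLp 2 (H × K) →L[ℂ] WithLp 2 (H × K) :=
  ((WithLp.prodContinuousLinearEquiv 2 ℂ H K).symm.toContinuousLinearMap).comp
    ((((A.coprod B).prod (B'.coprod C))).comp
      (WithLp.prodContinuousLinearEquiv 2 ℂ H K).toContinuousLinearMap)


set_option linter.unusedSectionVars false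

lemma blockOp_apply (A : H →L[ℂ] H) (B : K →L[ℂ] H) (B' : H →L[ℂ] K) (C : K →L[ℂ] K)
    (x : WithLp 2 (H × K)) :
    blockOp A B B' C x = (WithLp.equiv 2 _).symm (A x.fst + B x.snd, B' x.fst + C x.snd) := rfl

lemma blockOp_comp (A : H →L[ℂ] H) (B : K →L[ℂ] H) (B' : H →L[ℂ] K) (C : K →L[ℂ] K)
    (D : H →L[ℂ] H) (E : K →L[ℂ] H) (D' : H →L[ℂ] K) (F : K →L[ℂ] K) :
    (blockOp A B B' C).comp (blockOp D E D' F) =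
      blockOp (A.comp D + B.comp D') (A.comp E + B.comp F)
        (B'.comp D + C.comp D') (B'.comp E + C.comp F) := by
  ext x
  simp [blockOp_apply, map_add]
  constructor <;> abel

lemma blockOp_adjoint (A : H →L[ℂ] H) (B : K →L[ℂ] H) (B' : H →L[ℂ] K) (C : K →L[ℂ] K) :
    adjoint (blockOp A B B' C) = blockOp (adjoint A) (adjoint B') (adjoint B) (adjoint C) := by
  symm
  rw [eq_adjoint_iff]
  intro x y
  simp [blockOp_apply, WithLp.prod_inner_apply, inner_add_left, inner_add_right,
    adjoint_inner_left]
  ring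

variable {G : Type*} [NormedAddCommGroup G] [InnerProductSpace ℂ G] [CompleteSpace G]

def transferL (α pL pR : G →L[ℂ] G) (z : ℂ) :
    WithLp 2 (G × G) →L[ℂ] WithLp 2 (G × G) :=
  blockOp (z • Ring.inverse pL) (-(Ring.inverse pL * adjoint α))
    (-(z • (Ring.inverse pR * α))) (Ring.inverse pR)

lemma inv_intertwine {R : Type*} [Ring R] {a b x : R} (ha : IsUnit a) (hb : IsUnit b)
    (h : a * x = x * b) : Ring.inverse a * x = x * Ring.inverse b := by
  calc Ring.inverse a * x
      = Ring.inverse a * (x * b * Ring.inverse b) := by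
        rw [Ring.mul_inverse_cancel_right _ _ hb]
    _ = Ring.inverse a * (a * (x * Ring.inverse b)) := by rw [← h, mul_assoc]
    _ = x * Ring.inverse b := by rw [Ring.inverse_mul_cancel_left _ _ ha]

lemma id_eq_one : ContinuousLinearMap.id ℂ G = 1 := rfl

/-- **J-unitarity of the transfer matrix.** For a strict contraction `α` with
`ρ^L = (I - α†α)^{1/2}` and `ρ^R = (I - αα†)^{1/2}` (both invertible), the transfer matrix
satisfies `A^L(α,w)† J A^L(α,z) = [[w̄z I, 0], [0, -I]]`, where `J = diag(I, -I)`. -/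
theorem transferL_J_unitary (α pL pR : G →L[ℂ] G) (hα : ‖α‖ < 1)
    (hpL : pL.IsPositive) (hpL2 : pL * pL = 1 - adjoint α * α) (hpLu : IsUnit pL)
    (hpR : pR.IsPositive) (hpR2 : pR * pR = 1 - α * adjoint α) (hpRu : IsUnit pR)
    (w z : ℂ) :
    (adjoint (transferL α pL pR w)).comp
        ((blockOp (1 : G →L[ℂ] G) 0 0 (-1 : G →L[ℂ] G)).comp (transferL α pL pR z)) =
      blockOp (((starRingEnd ℂ) w * z) • (1 : G →L[ℂ] G)) 0 0 (-1 : G →L[ℂ] G) := by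
  have hsL : star pL = pL := hpL.isSelfAdjoint
  have hsR : star pR = pR := hpR.isSelfAdjoint
  have hqL : star (Ring.inverse pL) = Ring.inverse pL := by
    rw [← Ring.inverse_star, hsL]
  have hqR : star (Ring.inverse pR) = Ring.inverse pR := by
    rw [← Ring.inverse_star, hsR]
  have hPu : IsUnit (1 - adjoint α * α) := hpL2 ▸ (hpLu.mul hpLu)
  have hQu : IsUnit (1 - α * adjoint α) := hpR2 ▸ (hpRu.mul hpRu)
  have hqL2 : Ring.inverse pL * Ring.inverse pL = Ring.inverse (1 - adjoint α * α) := by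
    rw [← hpL2, Ring.mul_inverse_rev' (Commute.refl pL)]
  have hqR2 : Ring.inverse pR * Ring.inverse pR = Ring.inverse (1 - α * adjoint α) := by
    rw [← hpR2, Ring.mul_inverse_rev' (Commute.refl pR)]
  have hint1 : Ring.inverse (1 - adjoint α * α) * adjoint α
      = adjoint α * Ring.inverse (1 - α * adjoint α) :=
    inv_intertwine hPu hQu (by noncomm_ring)
  have hint2 : Ring.inverse (1 - α * adjoint α) * α = α * Ring.inverse (1 - adjoint α * α) :=
    inv_intertwine hQu hPu (by noncomm_ring)
  rw [transferL, transferL, blockOp_adjoint, blockOp_comp, blockOp_comp]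
  congr 1
  · simp only [one_def, ← ContinuousLinearMap.mul_def, one_mul, zero_mul, mul_zero,
      ← star_eq_adjoint, star_smul, star_neg, star_mul, hqL, hqR, star_star,
      add_zero, zero_add, neg_mul, mul_neg, neg_neg, smul_mul_smul_comm]
    rw [id_eq_one]
    simp only [one_mul, neg_zero, add_zero, smul_mul_smul_comm, smul_smul, starRingEnd_apply,
      ← smul_neg, ← smul_add]
    congr 1
    rw [star_eq_adjoint, hqL2]
    have e : adjoint α * Ring.inverse pR * (Ring.inverse pR * α)
        = adjoint α * α * Ring.inverse (1 - adjoint α * α) := by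
      rw [mul_assoc, ← mul_assoc (Ring.inverse pR), hqR2, hint2, ← mul_assoc]
    rw [e]
    calc Ring.inverse (1 - adjoint α * α) + -(adjoint α * α * Ring.inverse (1 - adjoint α * α))
        = (1 - adjoint α * α) * Ring.inverse (1 - adjoint α * α) := by noncomm_ring
      _ = 1 := Ring.mul_inverse_cancel _ hPu
  · simp only [← ContinuousLinearMap.mul_def,
      ← star_eq_adjoint, star_smul, star_neg,
      star_mul, hqL, hqR, star_star, one_mul, mul_one, zero_mul, mul_zero, neg_zero,
      add_zero, zero_add, neg_mul, mul_neg, neg_neg, smul_mul_smul_comm, smul_mul_assoc,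
      mul_smul_comm, starRingEnd_apply, smul_smul]
    rw [star_eq_adjoint]
    have e1 : Ring.inverse pL * (Ring.inverse pL * adjoint α)
        = adjoint α * Ring.inverse (1 - α * adjoint α) := by
      rw [← mul_assoc, hqL2, hint1]
    have e2 : adjoint α * Ring.inverse pR * Ring.inverse pR
        = adjoint α * Ring.inverse (1 - α * adjoint α) := by
      rw [mul_assoc, hqR2]
    rw [e1, e2, neg_add_cancel]
  · simp only [← ContinuousLinearMap.mul_def,
      ← star_eq_adjoint, star_smul, star_neg,
      star_mul, hqL, hqR, star_star, one_mul, mul_one, zero_mul, mul_zero, neg_zero,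
      add_zero, zero_add, neg_mul, mul_neg, neg_neg, smul_mul_smul_comm, smul_mul_assoc,
      mul_smul_comm, starRingEnd_apply, smul_smul, smul_zero]
    simp only [smul_neg, neg_neg]
    have e : Ring.inverse pR * (Ring.inverse pR * α) = α * Ring.inverse pL * Ring.inverse pL := by
      rw [← mul_assoc, hqR2, hint2, ← hqL2, ← mul_assoc]
    rw [e, neg_add_cancel]
  · simp only [← ContinuousLinearMap.mul_def,
      ← star_eq_adjoint, star_smul, star_neg,
      star_mul, hqL, hqR, star_star, one_mul, mul_one, zero_mul, mul_zero, neg_zero,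
      add_zero, zero_add, neg_mul, mul_neg, neg_neg, smul_mul_smul_comm, smul_mul_assoc,
      mul_smul_comm, starRingEnd_apply, smul_smul, smul_zero]
    rw [star_eq_adjoint, hqR2]
    have e : α * Ring.inverse pL * (Ring.inverse pL * adjoint α)
        = Ring.inverse (1 - α * adjoint α) * (α * adjoint α) := by
      rw [mul_assoc, ← mul_assoc (Ring.inverse pL), hqL2, ← mul_assoc, ← hint2, mul_assoc]
    rw [e]
    calc Ring.inverse (1 - α * adjoint α) * (α * adjoint α) + -Ring.inverse (1 - α * adjoint α)
        = -(Ring.inverse (1 - α * adjoint α) * (1 - α * adjoint α)) := by noncomm_ring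
      _ = -1 := by rw [Ring.inverse_mul_cancel _ hQu]
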